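/- The qubit subalgebra is a factor: if a bounded operator T on H commutes with each of a₁, a₂, a₃ and also commutes with every bounded operator S on H that commutes with each of a₁, a₂, a₃, then there exists c ∈ ℂ with T = c • (identity on H). Equivalently, the intersection of the centralizer of {a₁,a₂,a₃} with its own centralizer consists exactly of the scalar multiples of the identity. -/

import Mathlib

open Complex

noncomputable section

/-- The Hilbert space `H := ℓ²(ℤ, ℂ)`. -/
abbrev H : Type := lp (fun _ : ℤ => ℂ) 2

/-- The orthonormal basis vectors `e ℓ = lp.single 2 ℓ 1`. -/
def e (ℓ : ℤ) : H := lp.single 2 ℓ 1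

/-- `a₃ := U(π)`. -/
def a₃ (U : ℝ → (H →L[ℂ] H)) : H →L[ℂ] H := U Real.pi

/-- `a₊ := (1/2) • ((1 − U(π)) ∘ V*)`. -/
def aPlus (U : ℝ → (H →L[ℂ] H)) (V : unitary (H →L[ℂ] H)) : H →L[ℂ] H :=
  ((1 : ℂ) / 2) • ((1 - U Real.pi) ∘L star (V : H →L[ℂ] H))

/-- `a₋ := (1/2) • ((1 + U(π)) ∘ V)`. -/
def aMinus (U : ℝ → (H →L[ℂ] H)) (V : unitary (H →L[ℂ] H)) : H →L[ℂ] H :=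
  ((1 : ℂ) / 2) • ((1 + U Real.pi) ∘L (V : H →L[ℂ] H))

/-- `a₁ := a₊ + a₋`. -/
def a₁ (U : ℝ → (H →L[ℂ] H)) (V : unitary (H →L[ℂ] H)) : H →L[ℂ] H :=
  aPlus U V + aMinus U V

/-- `a₂ := −i•a₊ + i•a₋`. -/
def a₂ (U : ℝ → (H →L[ℂ] H)) (V : unitary (H →L[ℂ] H)) : H →L[ℂ] H :=
  (-Complex.I) • aPlus U V + Complex.I • aMinus U V


/-!
In the basis `e ℓ`, `a₃` is the parity `(-1) ^ ℓ`, `a₊` sends `e (2k)` to `e (2k - 1)` and kills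
the odd vectors, and `a₋` sends `e (2k - 1)` to `e (2k)` and kills the even ones. So `H` is the
orthogonal sum of the blocks `span {e (2k - 1), e (2k)}`, on each of which `a₁, a₂, a₃` act as the
Pauli matrices `σx, σy, -σz`: `H ≅ ℂ² ⊗ ℓ²(ℤ)`, with the generators acting on the first factor.

Every shift by an even amount whose weights are constant on blocks commutes with the generators;
in particular `V²`, `V*²` and the projection onto the block of `e (-1), e 0` do. If `T` commutes with
these and with `a₃`, then `e 0` is an eigenvector of `T`, `V^{±2}` carry its eigenvalue to every
`e (2k)`, and `a₊` to every `e (2k - 1)`.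
-/

lemma single_eq_smul_e (ℓ : ℤ) (a : ℂ) : lp.single 2 ℓ a = a • e ℓ := by
  have h := lp.single_smul (E := fun _ : ℤ => ℂ) 2 ℓ a 1
  rwa [smul_eq_mul, mul_one] at h

lemma hasSum_smul_e (f : H) : HasSum (fun ℓ => f ℓ • e ℓ) f := by
  simpa only [single_eq_smul_e] using lp.hasSum_single ENNReal.ofNat_ne_top f

lemma e_apply (ℓ j : ℤ) : e ℓ j = if j = ℓ then 1 else 0 := by
  simp [e, lp.single_apply, Pi.single_apply]

lemma ext_e {A B : H →L[ℂ] H} (h : ∀ ℓ, A (e ℓ) = B (e ℓ)) : A = B :=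
  ContinuousLinearMap.ext fun f =>
    ((hasSum_smul_e f).mapL A).unique (by simpa only [map_smul, h] using (hasSum_smul_e f).mapL B)

def IsWeightedShift (A : H →L[ℂ] H) (s : ℤ) (c : ℤ → ℂ) : Prop :=
  ∀ ℓ, A (e ℓ) = c ℓ • e (ℓ + s)

namespace IsWeightedShift

variable {T A B : H →L[ℂ] H} {s t : ℤ} {c d : ℤ → ℂ} {ℓ : ℤ} {α : ℂ}

lemma mul (hA : IsWeightedShift A s c) (hB : IsWeightedShift B t d) :
    IsWeightedShift (A * B) (t + s) (fun ℓ => d ℓ * c (ℓ + t)) := fun ℓ => by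
  rw [mul_apply_eq_comp, hB, map_smul, hA, smul_smul, add_assoc]

lemma commute (hA : IsWeightedShift A s c) (hB : IsWeightedShift B t d)
    (h : ∀ ℓ, d ℓ * c (ℓ + t) = c ℓ * d (ℓ + s)) : Commute A B :=
  ext_e fun ℓ => by
    rw [(hA.mul hB) ℓ, (hB.mul hA) ℓ]; dsimp only; rw [h, add_comm s]

lemma apply_apply_add (hA : IsWeightedShift A s c) (f : H) (j : ℤ) :
    A f (j + s) = c j * f j := by
  have hsum := ((hasSum_smul_e f).mapL A).mapL (lp.evalCLM ℂ (fun _ : ℤ => ℂ) 2 (j + s))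
  have hterm : ∀ ℓ, lp.evalCLM ℂ (fun _ : ℤ => ℂ) 2 (j + s) (A (f ℓ • e ℓ)) =
      if ℓ = j then c j * f j else 0 := fun ℓ => by
    simp only [map_smul, hA ℓ]
    change f ℓ • c ℓ • e (ℓ + s) (j + s) = _
    by_cases h : ℓ = j
    · simp [h, e_apply, mul_comm]
    · simp [h, e_apply, Ne.symm h]
  simp only [hterm] at hsum
  exact hsum.unique (hasSum_ite_eq j _)

lemma exists_apply_e_eq_smul_of_commute (hA : IsWeightedShift A 0 c)
    (hc : ∀ j ≠ ℓ, c j ≠ c ℓ) (hT : Commute T A) : ∃ α : ℂ, T (e ℓ) = α • e ℓ := by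
  refine ⟨T (e ℓ) ℓ, lp.ext (funext fun j => ?_)⟩
  by_cases hj : j = ℓ
  · simp [hj, e_apply]
  have hcoord := congrArg (fun f : H => f j) (congrArg (· (e ℓ)) hT)
  simp only [mul_apply_eq_comp, hA ℓ, add_zero, map_smul, lp.coeFn_smul, Pi.smul_apply,
    smul_eq_mul] at hcoord
  rw [← add_zero j, hA.apply_apply_add, add_zero] at hcoord
  have h : (c j - c ℓ) * T (e ℓ) j = 0 := by linear_combination -hcoord
  simpa [e_apply, hj, sub_ne_zero.mpr (hc j hj)] using h

lemma apply_e_add_eq_smul_of_commute (hA : IsWeightedShift A s c) (hc : c ℓ ≠ 0)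
    (hT : Commute T A) (h : T (e ℓ) = α • e ℓ) : T (e (ℓ + s)) = α • e (ℓ + s) := by
  have hTA := congrArg (· (e ℓ)) hT
  simp only [mul_apply_eq_comp, hA ℓ, h, map_smul, smul_comm α] at hTA
  exact smul_right_injective H hc hTA

end IsWeightedShift

def blockProj : H →L[ℂ] H :=
  (innerSL ℂ (e (-1))).smulRight (e (-1)) + (innerSL ℂ (e 0)).smulRight (e 0)

lemma inner_e_e (j ℓ : ℤ) : inner ℂ (e j) (e ℓ) = if ℓ = j then 1 else 0 := by
  rw [e, lp.inner_single_left]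
  simp [e_apply, eq_comm]

lemma isWeightedShift_blockProj :
    IsWeightedShift blockProj 0 (fun ℓ => if ℓ = -1 ∨ ℓ = 0 then 1 else 0) := fun ℓ => by
  simp only [blockProj, add_apply, ContinuousLinearMap.smulRight_apply, innerSL_apply_apply,
    inner_e_e, add_zero]
  by_cases h₁ : ℓ = -1
  · simp [h₁]
  by_cases h₀ : ℓ = 0 <;> simp [h₁, h₀]

section Generators

variable {U : ℝ → (H →L[ℂ] H)} {V : unitary (H →L[ℂ] H)}
  (hU : ∀ (θ : ℝ) (ℓ : ℤ), U θ (e ℓ) = Complex.exp (Complex.I * ℓ * θ) • e ℓ)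
  (hV : ∀ ℓ : ℤ, (V : H →L[ℂ] H) (e ℓ) = e (ℓ + 1))

lemma aPlus_eq : aPlus U V = (2⁻¹ : ℂ) • (a₁ U V + I • a₂ U V) := by
  simp only [a₁, a₂, smul_add, smul_smul, mul_neg, I_mul_I]
  module

lemma aMinus_eq : aMinus U V = (2⁻¹ : ℂ) • (a₁ U V - I • a₂ U V) := by
  simp only [a₁, a₂, smul_add, smul_sub, smul_smul, mul_neg, I_mul_I]
  module

lemma commute_a₁_and_a₂_iff {S : H →L[ℂ] H} :
    Commute S (a₁ U V) ∧ Commute S (a₂ U V) ↔ Commute S (aPlus U V) ∧ Commute S (aMinus U V) := by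
  constructor
  · rintro ⟨h₁, h₂⟩
    rw [aPlus_eq, aMinus_eq]
    exact ⟨(h₁.add_right (h₂.smul_right I)).smul_right _,
      (h₁.sub_right (h₂.smul_right I)).smul_right _⟩
  · rintro ⟨hplus, hminus⟩
    exact ⟨hplus.add_right hminus,
      (hplus.smul_right _).add_right (hminus.smul_right _)⟩

include hU in
lemma isWeightedShift_a₃ : IsWeightedShift (a₃ U) 0 (fun ℓ => if Even ℓ then 1 else -1) :=
  fun ℓ => by
    rw [a₃, hU, add_zero, mul_comm I, mul_assoc, mul_comm I, Complex.exp_int_mul,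
      Complex.exp_pi_mul_I]
    dsimp only
    split_ifs with h
    · rw [h.neg_one_zpow]
    · rw [(Int.not_even_iff_odd.mp h).neg_one_zpow]

include hV in
lemma isWeightedShift_V : IsWeightedShift V 1 1 := fun ℓ => by
  rw [hV, Pi.one_apply, one_smul]

include hV in
lemma isWeightedShift_star_V : IsWeightedShift (star (V : H →L[ℂ] H)) (-1) 1 := fun ℓ => by
  rw [Pi.one_apply, one_smul, ← sub_eq_add_neg]
  conv_lhs => rw [← sub_add_cancel ℓ 1, ← hV, ← mul_apply_eq_comp, Unitary.coe_star_mul_self]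
  rfl

include hU hV in
lemma isWeightedShift_aPlus :
    IsWeightedShift (aPlus U V) (-1) (fun ℓ => if Even ℓ then 1 else 0) := fun ℓ => by
  have h₃ := isWeightedShift_a₃ hU (ℓ - 1)
  simp only [a₃, add_zero] at h₃
  rw [aPlus, smul_apply, ContinuousLinearMap.comp_apply, isWeightedShift_star_V hV,
    Pi.one_apply, one_smul, ← sub_eq_add_neg, sub_apply, one_apply_eq_self,
    h₃]
  by_cases h : Even ℓ <;>
    simp only [Int.even_sub_one, h, not_true_eq_false, not_false_eq_true, if_true, if_false] <;>
    module

include hU hV in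
lemma isWeightedShift_aMinus :
    IsWeightedShift (aMinus U V) 1 (fun ℓ => if Even ℓ then 0 else 1) := fun ℓ => by
  have h₃ := isWeightedShift_a₃ hU (ℓ + 1)
  simp only [a₃, add_zero] at h₃
  rw [aMinus, smul_apply, ContinuousLinearMap.comp_apply, isWeightedShift_V hV,
    Pi.one_apply, one_smul, add_apply, one_apply_eq_self, h₃]
  by_cases h : Even ℓ <;>
    simp only [Int.even_add_one, h, not_true_eq_false, not_false_eq_true, if_true, if_false] <;>
    module

include hU hV in
lemma commute_generators_of_isWeightedShift {S : H →L[ℂ] H} {s : ℤ} {d : ℤ → ℂ}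
    (hS : IsWeightedShift S s d) (hs : Even s) (hd : ∀ ℓ, Even ℓ → d (ℓ - 1) = d ℓ) :
    Commute S (a₁ U V) ∧ Commute S (a₂ U V) ∧ Commute S (a₃ U) := by
  rw [← and_assoc, commute_a₁_and_a₂_iff]
  refine ⟨⟨hS.commute (isWeightedShift_aPlus hU hV) fun ℓ => ?_,
    hS.commute (isWeightedShift_aMinus hU hV) fun ℓ => ?_⟩,
    hS.commute (isWeightedShift_a₃ hU) fun ℓ => ?_⟩ <;>
  simp only [Int.even_add, hs, iff_true, add_zero]
  · by_cases h : Even ℓ <;> simp [h, ← sub_eq_add_neg, hd]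
  · by_cases h : Even ℓ
    · simp [h]
    · simpa [h] using (hd (ℓ + 1) (by simpa [Int.even_add_one] using h)).symm
  · ring

include hU hV in
lemma commute_generators_blockProj :
    Commute blockProj (a₁ U V) ∧ Commute blockProj (a₂ U V) ∧ Commute blockProj (a₃ U) := by
  refine commute_generators_of_isWeightedShift hU hV isWeightedShift_blockProj Even.zero ?_
  rintro ℓ ⟨k, rfl⟩
  simp only [show k + k - 1 = -1 ∨ k + k - 1 = 0 ↔ k + k = -1 ∨ k + k = 0 by omega]

include hU hV in
lemma commute_generators_V_mul_V :
    Commute (V * V : H →L[ℂ] H) (a₁ U V) ∧ Commute (V * V : H →L[ℂ] H) (a₂ U V) ∧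
      Commute (V * V : H →L[ℂ] H) (a₃ U) :=
  commute_generators_of_isWeightedShift hU hV
    ((isWeightedShift_V hV).mul (isWeightedShift_V hV)) (by decide) (by simp)

include hU hV in
lemma commute_generators_star_V_mul_star_V :
    Commute (star V * star V : H →L[ℂ] H) (a₁ U V) ∧
      Commute (star V * star V : H →L[ℂ] H) (a₂ U V) ∧
      Commute (star V * star V : H →L[ℂ] H) (a₃ U) :=
  commute_generators_of_isWeightedShift hU hV
    ((isWeightedShift_star_V hV).mul (isWeightedShift_star_V hV)) (by decide) (by simp)

include hU in
lemma exists_apply_e_zero_eq_smul {T : H →L[ℂ] H} (hP : Commute T blockProj)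
    (h₃ : Commute T (a₃ U)) : ∃ α : ℂ, T (e 0) = α • e 0 := by
  -- `blockProj * a₃` is diagonal with entries `-1, 1` at `e (-1), e 0` and `0` elsewhere.
  refine (isWeightedShift_blockProj.mul (isWeightedShift_a₃ hU)).exists_apply_e_eq_smul_of_commute
    (fun j hj => ?_) (hP.mul_right h₃)
  rcases eq_or_ne j (-1) with rfl | hj'
  · norm_num
  · simp [hj, hj']

include hV in
lemma apply_e_two_mul_eq_smul {T : H →L[ℂ] H} {α : ℂ} (hW : Commute T (V * V : H →L[ℂ] H))
    (hW' : Commute T (star V * star V : H →L[ℂ] H)) (h₀ : T (e 0) = α • e 0) (k : ℤ) :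
    T (e (2 * k)) = α • e (2 * k) := by
  induction k using Int.induction_on with
  | zero => simpa using h₀
  | succ k ih =>
    have h := ((isWeightedShift_V hV).mul (isWeightedShift_V hV)).apply_e_add_eq_smul_of_commute
      (by simp) hW ih
    rwa [show 2 * (k : ℤ) + (1 + 1) = 2 * (k + 1) by ring] at h
  | pred k ih =>
    have h := ((isWeightedShift_star_V hV).mul
      (isWeightedShift_star_V hV)).apply_e_add_eq_smul_of_commute (by simp) hW' ih
    rwa [show 2 * -(k : ℤ) + (-1 + -1) = 2 * (-k - 1) by ring] at h

include hU hV in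
theorem exists_eq_smul_one_of_commute_generators {T : H →L[ℂ] H}
    (hT₁ : Commute T (a₁ U V)) (hT₂ : Commute T (a₂ U V)) (hT₃ : Commute T (a₃ U))
    (hTc : ∀ S, Commute S (a₁ U V) → Commute S (a₂ U V) → Commute S (a₃ U) → Commute T S) :
    ∃ c : ℂ, T = c • (1 : H →L[ℂ] H) := by
  have hTc' {S} (hS : Commute S (a₁ U V) ∧ Commute S (a₂ U V) ∧ Commute S (a₃ U)) :
      Commute T S :=
    hTc S hS.1 hS.2.1 hS.2.2
  obtain ⟨α, h₀⟩ := exists_apply_e_zero_eq_smul hU (hTc' (commute_generators_blockProj hU hV)) hT₃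
  have heven := apply_e_two_mul_eq_smul hV (hTc' (commute_generators_V_mul_V hU hV))
    (hTc' (commute_generators_star_V_mul_star_V hU hV)) h₀
  refine ⟨α, ext_e fun ℓ => ?_⟩
  obtain ⟨k, rfl | rfl⟩ : ∃ k, ℓ = 2 * k ∨ ℓ = 2 * k - 1 := ⟨(ℓ + 1) / 2, by omega⟩
  · simpa using heven k
  · simpa [sub_eq_add_neg] using (isWeightedShift_aPlus hU hV).apply_e_add_eq_smul_of_commute
      (by simp) (commute_a₁_and_a₂_iff.mp ⟨hT₁, hT₂⟩).1 (heven k)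

end Generators

lemma mem_centralizer_triple_iff {M : Type*} [Mul M] {a b c z : M} :
    z ∈ Set.centralizer {a, b, c} ↔ Commute z a ∧ Commute z b ∧ Commute z c := by
  simp only [Set.mem_centralizer_iff, Set.forall_mem_insert, Set.mem_singleton_iff, forall_eq]
  simp only [commute_iff_eq, eq_comm]

/-- **The qubit subalgebra is a factor:** any bounded operator commuting with
`a₁, a₂, a₃` and with every bounded operator that commutes with `a₁, a₂, a₃` is a
scalar multiple of the identity; equivalently, the intersection of the centralizer
of `{a₁, a₂, a₃}` with its own centralizer consists exactly of the scalars. -/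
theorem qubit_subalgebra_is_factor
    (U : ℝ → (H →L[ℂ] H)) (V : unitary (H →L[ℂ] H))
    (hU : ∀ (θ : ℝ) (ℓ : ℤ), U θ (e ℓ) = Complex.exp (Complex.I * ℓ * θ) • e ℓ)
    (hV : ∀ ℓ : ℤ, (V : H →L[ℂ] H) (e ℓ) = e (ℓ + 1)) :
    (∀ T : H →L[ℂ] H,
      T ∘L a₁ U V = a₁ U V ∘L T →
      T ∘L a₂ U V = a₂ U V ∘L T →
      T ∘L a₃ U = a₃ U ∘L T →
      (∀ S : H →L[ℂ] H,
        S ∘L a₁ U V = a₁ U V ∘L S →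
        S ∘L a₂ U V = a₂ U V ∘L S →
        S ∘L a₃ U = a₃ U ∘L S →
        T ∘L S = S ∘L T) →
      ∃ c : ℂ, T = c • (1 : H →L[ℂ] H)) ∧
    Set.centralizer ({a₁ U V, a₂ U V, a₃ U} : Set (H →L[ℂ] H)) ∩
        Set.centralizer (Set.centralizer ({a₁ U V, a₂ U V, a₃ U} : Set (H →L[ℂ] H))) =
      Set.range (fun c : ℂ => c • (1 : H →L[ℂ] H)) := by
  refine ⟨fun T => exists_eq_smul_one_of_commute_generators hU hV, Set.ext fun T => ⟨?_, ?_⟩⟩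
  · rintro ⟨hT, hTc⟩
    obtain ⟨h₁, h₂, h₃⟩ := mem_centralizer_triple_iff.mp hT
    obtain ⟨c, rfl⟩ := exists_eq_smul_one_of_commute_generators hU hV h₁ h₂ h₃
      fun S hS₁ hS₂ hS₃ => (hTc S (mem_centralizer_triple_iff.mpr ⟨hS₁, hS₂, hS₃⟩)).symm
    exact ⟨c, rfl⟩
  · rintro ⟨c, rfl⟩
    have hc : c • (1 : H →L[ℂ] H) ∈ Set.center (H →L[ℂ] H) := by
      simpa [Algebra.algebraMap_eq_smul_one] using Set.algebraMap_mem_center (A := H →L[ℂ] H) c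
    exact ⟨Set.center_subset_centralizer _ hc, Set.center_subset_centralizer _ hc⟩
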